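/- arXiv:1301.5087 — 8 statements merged into one kernel-verified Lean document; each statement's English description precedes it below -/
import Mathlib

section
/- Let V, U, W be vector spaces over a field and f : V ⊕ U → W ⊕ U a linear map with components f₁₁ : V → W, f₁₂ : U → W, f₂₁ : V → U, f₂₂ : U → U. Suppose range(f₂₁) ⊆ range(id - f₂₂) and ker(id - f₂₂) ⊆ ker(f₁₂). Then the assignment Tr(f)(v) = f₁₁(v) + f₁₂(u), where u is any vector with (id - f₂₂)(u) = f₂₁(v), is a well-defined linear map V → W (i.e., the value does not depend on the choice of u). -/
open LinearMap

variable {K V U U' W : Type*}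

/-- The (1,1) component of a linear map `V × U →ₗ W × U'`. -/
def comp11 [Field K] [AddCommGroup V] [Module K V] [AddCommGroup U] [Module K U]
    [AddCommGroup U'] [Module K U'] [AddCommGroup W] [Module K W]
    (f : V × U →ₗ[K] W × U') : V →ₗ[K] W :=
  (LinearMap.fst K W U') ∘ₗ f ∘ₗ (LinearMap.inl K V U)

/-- The (1,2) component. -/
def comp12 [Field K] [AddCommGroup V] [Module K V] [AddCommGroup U] [Module K U]
    [AddCommGroup U'] [Module K U'] [AddCommGroup W] [Module K W]
    (f : V × U →ₗ[K] W × U') : U →ₗ[K] W :=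
  (LinearMap.fst K W U') ∘ₗ f ∘ₗ (LinearMap.inr K V U)

/-- The (2,1) component. -/
def comp21 [Field K] [AddCommGroup V] [Module K V] [AddCommGroup U] [Module K U]
    [AddCommGroup U'] [Module K U'] [AddCommGroup W] [Module K W]
    (f : V × U →ₗ[K] W × U') : V →ₗ[K] U' :=
  (LinearMap.snd K W U') ∘ₗ f ∘ₗ (LinearMap.inl K V U)

/-- The (2,2) component. -/
def comp22 [Field K] [AddCommGroup V] [Module K V] [AddCommGroup U] [Module K U]
    [AddCommGroup U'] [Module K U'] [AddCommGroup W] [Module K W]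
    (f : V × U →ₗ[K] W × U') : U →ₗ[K] U' :=
  (LinearMap.snd K W U') ∘ₗ f ∘ₗ (LinearMap.inr K V U)

/-- The kernel-image trace class condition. -/
def TraceClass [Field K] [AddCommGroup V] [Module K V] [AddCommGroup U] [Module K U]
    [AddCommGroup W] [Module K W] (f : V × U →ₗ[K] W × U) : Prop :=
  LinearMap.range (comp21 f) ≤ LinearMap.range (LinearMap.id - comp22 f) ∧
    LinearMap.ker (LinearMap.id - comp22 f) ≤ LinearMap.ker (comp12 f)

/-- `T` is the kernel-image partial trace of `f`. -/
def IsTrace [Field K] [AddCommGroup V] [Module K V] [AddCommGroup U] [Module K U]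
    [AddCommGroup W] [Module K W] (f : V × U →ₗ[K] W × U) (T : V →ₗ[K] W) : Prop :=
  ∀ (v : V) (u : U), ((LinearMap.id - comp22 f : U →ₗ[K] U)) u = comp21 f v →
    T v = comp11 f v + comp12 f u

/-!
Since `ker (id - f₂₂) ≤ ker f₁₂`, the map `f₁₂` factors through `id - f₂₂`, i.e. it descends to a
linear map `range (id - f₂₂) → W` sending `(id - f₂₂) u` to `f₁₂ u`; composing it with `f₂₁`, whose
range lies in `range (id - f₂₂)`, gives the correction term `v ↦ f₁₂ u` as a linear map of `v`.
-/

namespace LinearMap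

variable {R M N P X : Type*} [Ring R] [AddCommGroup M] [Module R M] [AddCommGroup N] [Module R N]
  [AddCommGroup P] [Module R P] [AddCommGroup X] [Module R X]

noncomputable def factorThroughRange (A : M →ₗ[R] N) (C : M →ₗ[R] P) (h : ker A ≤ ker C) :
    range A →ₗ[R] P :=
  (ker A).liftQ C h ∘ₗ A.quotKerEquivRange.symm.toLinearMap

theorem factorThroughRange_apply_of_eq (A : M →ₗ[R] N) (C : M →ₗ[R] P) (h : ker A ≤ ker C)
    {y : range A} {u : M} (hy : (y : N) = A u) : factorThroughRange A C h y = C u := by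
  obtain rfl : y = ⟨A u, mem_range_self A u⟩ := Subtype.ext hy
  simp [factorThroughRange]

theorem exists_apply_eq_of_range_le_of_ker_le (A : M →ₗ[R] N) (B : X →ₗ[R] N) (C : M →ₗ[R] P)
    (hBA : range B ≤ range A) (hAC : ker A ≤ ker C) :
    ∃ L : X →ₗ[R] P, ∀ x u, A u = B x → L x = C u :=
  ⟨factorThroughRange A C hAC ∘ₗ B.codRestrict (range A) (fun x ↦ hBA ⟨x, rfl⟩),
    fun _ _ hu ↦ factorThroughRange_apply_of_eq A C hAC hu.symm⟩

end LinearMap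

/-- under the kernel-image trace class conditions, the assignment
`v ↦ f₁₁ v + f₁₂ u` (for any `u` with `(id - f₂₂) u = f₂₁ v`) is a well-defined
linear map `V → W`. -/
theorem kernel_image_trace_well_defined
    [Field K] [AddCommGroup V] [Module K V] [AddCommGroup U] [Module K U]
    [AddCommGroup W] [Module K W] (f : V × U →ₗ[K] W × U)
    (him : LinearMap.range (comp21 f) ≤ LinearMap.range (LinearMap.id - comp22 f))
    (hker : LinearMap.ker (LinearMap.id - comp22 f) ≤ LinearMap.ker (comp12 f)) :
    ∃ T : V →ₗ[K] W, IsTrace f T := by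
  obtain ⟨L, hL⟩ := exists_apply_eq_of_range_le_of_ker_le _ (comp21 f) (comp12 f) him hker
  exact ⟨comp11 f + L, fun v u hu ↦ by rw [LinearMap.add_apply, hL v u hu]⟩
end

section
/- Let U be a vector space and σ : U ⊕ U → U ⊕ U the swap map σ(u,v) = (v,u). Then σ satisfies the kernel-image trace class conditions (im σ₂₁ ⊆ im(id - σ₂₂) and ker(id - σ₂₂) ⊆ ker σ₁₂), and the resulting partial trace Tr(σ) equals the identity on U (yanking axiom). -/
open LinearMap

variable {K V U U' W : Type*}

section

variable [Field K] [AddCommGroup V] [Module K V] [AddCommGroup U] [Module K U]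
  [AddCommGroup W] [Module K W]

theorem traceClass_of_comp22_eq_zero {f : V × U →ₗ[K] W × U} (h : comp22 f = 0) :
    TraceClass f := by
  rw [TraceClass, h, sub_zero, range_id, ker_id]
  exact ⟨le_top, bot_le⟩

theorem isTrace_of_comp22_eq_zero {f : V × U →ₗ[K] W × U} (h : comp22 f = 0) :
    IsTrace f (comp11 f + comp12 f ∘ₗ comp21 f) := by
  intro v u hu
  rw [h, sub_zero, id_apply] at hu
  rw [hu]
  rfl

end

section

variable [Field K] [AddCommGroup U] [Module K U]

theorem comp11_prodComm : comp11 (LinearEquiv.prodComm K U U).toLinearMap = 0 := by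
  ext; simp [comp11]

theorem comp12_prodComm : comp12 (LinearEquiv.prodComm K U U).toLinearMap = LinearMap.id := by
  ext; simp [comp12]

theorem comp21_prodComm : comp21 (LinearEquiv.prodComm K U U).toLinearMap = LinearMap.id := by
  ext; simp [comp21]

theorem comp22_prodComm : comp22 (LinearEquiv.prodComm K U U).toLinearMap = 0 := by
  ext; simp [comp22]

end

/-- the swap map on `U ⊕ U` is in the kernel-image trace class and its
partial trace is the identity (yanking). -/
theorem kernel_image_trace_yanking
    [Field K] [AddCommGroup U] [Module K U] :
    TraceClass ((LinearEquiv.prodComm K U U).toLinearMap) ∧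
      IsTrace ((LinearEquiv.prodComm K U U).toLinearMap) (LinearMap.id) := by
  refine ⟨traceClass_of_comp22_eq_zero comp22_prodComm, ?_⟩
  have h := isTrace_of_comp22_eq_zero (comp22_prodComm (K := K) (U := U))
  rwa [comp11_prodComm, comp12_prodComm, comp21_prodComm, zero_add, id_comp] at h
end

section
/- Let f : V ⊕ U → W ⊕ U be a linear map satisfying the kernel-image trace class conditions, and let g : V' → V, h : W → W' be linear maps. Then (h ⊕ id_U) ∘ f ∘ (g ⊕ id_U) also satisfies the trace class conditions, and Tr((h ⊕ 1)∘f∘(g ⊕ 1)) = h ∘ Tr(f) ∘ g (naturality of the kernel-image partial trace). -/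
open LinearMap

variable {K V U U' W : Type*}

section Naturality

variable [Field K] [AddCommGroup V] [Module K V] [AddCommGroup U] [Module K U]
  [AddCommGroup U'] [Module K U'] [AddCommGroup W] [Module K W]
  {V' W' : Type*} [AddCommGroup V'] [Module K V'] [AddCommGroup W'] [Module K W']
  (f : V × U →ₗ[K] W × U') (g : V' →ₗ[K] V) (h : W →ₗ[K] W')

@[simp]
theorem comp11_prodMap_comp_prodMap :
    comp11 (h.prodMap (LinearMap.id : U' →ₗ[K] U') ∘ₗ f ∘ₗ g.prodMap LinearMap.id) =
      h ∘ₗ comp11 f ∘ₗ g := by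
  ext v; simp [comp11]

@[simp]
theorem comp12_prodMap_comp_prodMap :
    comp12 (h.prodMap (LinearMap.id : U' →ₗ[K] U') ∘ₗ f ∘ₗ g.prodMap LinearMap.id) =
      h ∘ₗ comp12 f := by
  ext u; simp [comp12]

@[simp]
theorem comp21_prodMap_comp_prodMap :
    comp21 (h.prodMap (LinearMap.id : U' →ₗ[K] U') ∘ₗ f ∘ₗ g.prodMap LinearMap.id) =
      comp21 f ∘ₗ g := by
  ext v; simp [comp21]

@[simp]
theorem comp22_prodMap_comp_prodMap :
    comp22 (h.prodMap (LinearMap.id : U' →ₗ[K] U') ∘ₗ f ∘ₗ g.prodMap LinearMap.id) =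
      comp22 f := by
  ext u; simp [comp22]

end Naturality

section Trace

variable [Field K] [AddCommGroup V] [Module K V] [AddCommGroup U] [Module K U]
  [AddCommGroup W] [Module K W]
  {V' W' : Type*} [AddCommGroup V'] [Module K V'] [AddCommGroup W'] [Module K W']
  {f : V × U →ₗ[K] W × U} (g : V' →ₗ[K] V) (h : W →ₗ[K] W')

theorem TraceClass.prodMap_comp_prodMap (hf : TraceClass f) :
    TraceClass (h.prodMap (LinearMap.id : U →ₗ[K] U) ∘ₗ f ∘ₗ g.prodMap LinearMap.id) := by
  simp only [TraceClass, comp21_prodMap_comp_prodMap, comp22_prodMap_comp_prodMap,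
    comp12_prodMap_comp_prodMap]
  exact ⟨(range_comp_le_range g (comp21 f)).trans hf.1,
    hf.2.trans (ker_le_ker_comp (comp12 f) h)⟩

theorem IsTrace.prodMap_comp_prodMap {T : V →ₗ[K] W} (hT : IsTrace f T) :
    IsTrace (h.prodMap (LinearMap.id : U →ₗ[K] U) ∘ₗ f ∘ₗ g.prodMap LinearMap.id)
      (h ∘ₗ T ∘ₗ g) := by
  intro v u hu
  simp only [comp11_prodMap_comp_prodMap, comp12_prodMap_comp_prodMap,
    comp21_prodMap_comp_prodMap, comp22_prodMap_comp_prodMap] at hu ⊢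
  simp [hT (g v) u hu]

end Trace

/-- naturality of the kernel-image partial trace. -/
theorem kernel_image_trace_naturality
    {V' W' : Type*}
    [Field K] [AddCommGroup V] [Module K V] [AddCommGroup U] [Module K U]
    [AddCommGroup W] [Module K W] [AddCommGroup V'] [Module K V']
    [AddCommGroup W'] [Module K W']
    (f : V × U →ₗ[K] W × U) (g : V' →ₗ[K] V) (h : W →ₗ[K] W')
    (hf : TraceClass f) :
    TraceClass ((h.prodMap (LinearMap.id : U →ₗ[K] U)) ∘ₗ f ∘ₗ
        (g.prodMap (LinearMap.id : U →ₗ[K] U))) ∧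
      ∀ T : V →ₗ[K] W, IsTrace f T →
        IsTrace ((h.prodMap (LinearMap.id : U →ₗ[K] U)) ∘ₗ f ∘ₗ
            (g.prodMap (LinearMap.id : U →ₗ[K] U))) (h ∘ₗ T ∘ₗ g) :=
  ⟨hf.prodMap_comp_prodMap g h, fun _ hT => hT.prodMap_comp_prodMap g h⟩
end

section
/- Let f : X ⊕ U → Y ⊕ U' and g : U' → U be linear maps. Then (id_Y ⊕ g) ∘ f satisfies the kernel-image trace class conditions with respect to U if and only if f ∘ (id_X ⊕ g) satisfies them with respect to U', and in that case the two partial traces coincide: Tr^U((1 ⊕ g) f) = Tr^{U'}(f (1 ⊕ g)) (dinaturality). -/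
open LinearMap

variable {K V U U' W : Type*}

/-!
Write `a, p, c` for the components `f₂₁, f₂₂, f₁₂` of `f`. Both traced maps have the same
`(1,1)` component, and their remaining components are `g a, g p, c` and `a, p g, c g`. Everything
rests on the push-through identity `g (1 - p g) = (1 - g p) g`: if `(1 - g p) u = g w`, then
`v = w + p u` solves `(1 - p g) v = w` with `g v = u`, and `g` maps the fixed points of `p g`
onto those of `g p` (with `p` going back). This transports the range condition, the kernel
condition and the solutions defining the two traces between the two sides.
-/

namespace LinearMap

variable {R M N : Type*} [Semiring R] [AddCommGroup M] [Module R M] [AddCommGroup N] [Module R N]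
  (p : M →ₗ[R] N) (q : N →ₗ[R] M)

theorem comp_id_sub_comp : q ∘ₗ (id - p ∘ₗ q) = (id - q ∘ₗ p) ∘ₗ q := by
  ext; simp

variable {p q}

theorem apply_add_of_id_sub_comp_apply_eq {u : M} {w : N}
    (h : (id - q ∘ₗ p : M →ₗ[R] M) u = q w) : q (w + p u) = u := by
  simp only [sub_apply, id_apply, comp_apply] at h
  rw [map_add, ← h, sub_add_cancel]

theorem id_sub_comp_apply_add_of_eq {u : M} {w : N} (h : (id - q ∘ₗ p : M →ₗ[R] M) u = q w) :
    (id - p ∘ₗ q : N →ₗ[R] N) (w + p u) = w := by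
  rw [sub_apply, comp_apply, apply_add_of_id_sub_comp_apply_eq h, id_apply, add_sub_cancel_right]

theorem apply_mem_range_id_sub_comp_iff {w : N} :
    q w ∈ range (id - q ∘ₗ p) ↔ w ∈ range (id - p ∘ₗ q) := by
  constructor
  · rintro ⟨u, hu⟩
    exact ⟨w + p u, id_sub_comp_apply_add_of_eq hu⟩
  · rintro ⟨v, rfl⟩
    exact ⟨q v, by rw [← comp_apply (id - q ∘ₗ p), ← comp_id_sub_comp, comp_apply]⟩

theorem ker_id_sub_comp_eq_map : ker (id - q ∘ₗ p) = (ker (id - p ∘ₗ q)).map q := by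
  ext u
  simp only [mem_ker, Submodule.mem_map, sub_apply, id_apply, comp_apply, sub_eq_zero]
  constructor
  · intro hu
    exact ⟨p u, by rw [← hu], hu.symm⟩
  · rintro ⟨v, hv, rfl⟩
    rw [← hv]

theorem range_comp_le_range_id_sub_comp_iff {X : Type*} [AddCommGroup X] [Module R X]
    (a : X →ₗ[R] N) : range (q ∘ₗ a) ≤ range (id - q ∘ₗ p) ↔ range a ≤ range (id - p ∘ₗ q) := by
  constructor <;> rintro h _ ⟨x, rfl⟩
  · exact apply_mem_range_id_sub_comp_iff.mp (h ⟨x, rfl⟩)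
  · exact apply_mem_range_id_sub_comp_iff.mpr (h ⟨x, rfl⟩)

end LinearMap

section Components

variable {U'' : Type*} [Field K] [AddCommGroup V] [Module K V] [AddCommGroup W] [Module K W]
  [AddCommGroup U] [Module K U] [AddCommGroup U'] [Module K U'] [AddCommGroup U''] [Module K U'']

section PostComp

variable (f : V × U →ₗ[K] W × U') (g : U' →ₗ[K] U'')

@[simp] theorem comp11_prodMap_id_comp : comp11 ((id.prodMap g) ∘ₗ f) = comp11 f := rfl

@[simp] theorem comp12_prodMap_id_comp : comp12 ((id.prodMap g) ∘ₗ f) = comp12 f := rfl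

@[simp] theorem comp21_prodMap_id_comp : comp21 ((id.prodMap g) ∘ₗ f) = g ∘ₗ comp21 f := rfl

@[simp] theorem comp22_prodMap_id_comp : comp22 ((id.prodMap g) ∘ₗ f) = g ∘ₗ comp22 f := rfl

end PostComp

section PreComp

variable (f : V × U →ₗ[K] W × U') (g : U'' →ₗ[K] U)

@[simp] theorem comp11_comp_prodMap_id : comp11 (f ∘ₗ id.prodMap g) = comp11 f := by
  ext; simp [comp11]

@[simp] theorem comp12_comp_prodMap_id : comp12 (f ∘ₗ id.prodMap g) = comp12 f ∘ₗ g := rfl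

@[simp] theorem comp21_comp_prodMap_id : comp21 (f ∘ₗ id.prodMap g) = comp21 f := by
  ext; simp [comp21]

@[simp] theorem comp22_comp_prodMap_id : comp22 (f ∘ₗ id.prodMap g) = comp22 f ∘ₗ g := rfl

end PreComp

end Components

section Dinaturality

variable {X Y : Type*} [Field K] [AddCommGroup X] [Module K X] [AddCommGroup Y] [Module K Y]
  [AddCommGroup U] [Module K U] [AddCommGroup U'] [Module K U']
  {f : X × U →ₗ[K] Y × U'} {g : U' →ₗ[K] U}

theorem traceClass_prodMap_id_comp_iff :
    TraceClass ((id.prodMap g) ∘ₗ f) ↔ TraceClass (f ∘ₗ id.prodMap g) := by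
  simp only [TraceClass, comp21_prodMap_id_comp, comp22_prodMap_id_comp, comp12_prodMap_id_comp,
    comp21_comp_prodMap_id, comp22_comp_prodMap_id, comp12_comp_prodMap_id,
    range_comp_le_range_id_sub_comp_iff]
  rw [ker_id_sub_comp_eq_map, Submodule.map_le_iff_le_comap, ← ker_comp]

theorem IsTrace.eq_of_prodMap_id_comp {T T' : X →ₗ[K] Y}
    (hc : TraceClass ((id.prodMap g) ∘ₗ f)) (hT : IsTrace ((id.prodMap g) ∘ₗ f) T)
    (hT' : IsTrace (f ∘ₗ id.prodMap g) T') : T = T' := by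
  ext x
  obtain ⟨u, hu⟩ := hc.1 ⟨x, rfl⟩
  rw [comp21_prodMap_id_comp, comp22_prodMap_id_comp] at hu
  have hv := id_sub_comp_apply_add_of_eq hu
  rw [← comp22_comp_prodMap_id, ← comp21_comp_prodMap_id f g] at hv
  calc T x = comp11 f x + comp12 f u := by simpa using hT x u hu
    _ = comp11 f x + comp12 f (g (comp21 f x + comp22 f u)) := by
      rw [apply_add_of_id_sub_comp_apply_eq hu]
    _ = T' x := by simpa using (hT' x _ hv).symm

end Dinaturality

/-- dinaturality of the kernel-image partial trace. -/
theorem kernel_image_trace_dinaturality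
    {X Y : Type*}
    [Field K] [AddCommGroup X] [Module K X] [AddCommGroup Y] [Module K Y]
    [AddCommGroup U] [Module K U] [AddCommGroup U'] [Module K U']
    (f : X × U →ₗ[K] Y × U') (g : U' →ₗ[K] U) :
    (TraceClass (((LinearMap.id : Y →ₗ[K] Y).prodMap g) ∘ₗ f) ↔
        TraceClass (f ∘ₗ ((LinearMap.id : X →ₗ[K] X).prodMap g))) ∧
      (TraceClass (((LinearMap.id : Y →ₗ[K] Y).prodMap g) ∘ₗ f) →
        ∀ T T' : X →ₗ[K] Y,
          IsTrace (((LinearMap.id : Y →ₗ[K] Y).prodMap g) ∘ₗ f) T →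
          IsTrace (f ∘ₗ ((LinearMap.id : X →ₗ[K] X).prodMap g)) T' →
          T = T') :=
  ⟨traceClass_prodMap_id_comp_iff, fun hc _ _ hT hT' => hT.eq_of_prodMap_id_comp hc hT'⟩
end

section
/- Let f : X ⊕ U → Y ⊕ U satisfy the kernel-image trace class conditions and let g : W → Z be any linear map. Then g ⊕ f : (W ⊕ X) ⊕ U → (Z ⊕ Y) ⊕ U (with appropriate associativity rearrangement) satisfies the trace class conditions, and Tr(g ⊕ f) = g ⊕ Tr(f) (superposing axiom). -/
open LinearMap

variable {K V U U' W : Type*}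

section Superpose

variable {X Y Z W₀ : Type*} [Field K] [AddCommGroup X] [Module K X] [AddCommGroup Y] [Module K Y]
  [AddCommGroup U] [Module K U] [AddCommGroup Z] [Module K Z] [AddCommGroup W₀] [Module K W₀]

/-- `g ⊕ f`, with the feedback space `U` reassociated to the outside. -/
def superpose (g : W₀ →ₗ[K] Z) (f : X × U →ₗ[K] Y × U) : (W₀ × X) × U →ₗ[K] (Z × Y) × U :=
  (LinearEquiv.prodAssoc K Z Y U).symm.toLinearMap ∘ₗ g.prodMap f ∘ₗ
    (LinearEquiv.prodAssoc K W₀ X U).toLinearMap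

variable (g : W₀ →ₗ[K] Z) (f : X × U →ₗ[K] Y × U)

theorem comp11_superpose : comp11 (superpose g f) = g.prodMap (comp11 f) := by
  ext <;> simp [comp11, superpose, LinearEquiv.prodAssoc]

theorem comp12_superpose : comp12 (superpose g f) = LinearMap.inr K Z Y ∘ₗ comp12 f := by
  ext <;> simp [comp12, superpose, LinearEquiv.prodAssoc]

theorem comp21_superpose : comp21 (superpose g f) = comp21 f ∘ₗ LinearMap.snd K W₀ X := by
  ext <;> simp [comp21, superpose, LinearEquiv.prodAssoc]

theorem comp22_superpose : comp22 (superpose g f) = comp22 f := by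
  ext; simp [comp22, superpose, LinearEquiv.prodAssoc]

theorem TraceClass.superpose (hf : TraceClass f) : TraceClass (superpose g f) := by
  rw [TraceClass, comp21_superpose, comp22_superpose, comp12_superpose,
    range_comp_of_range_eq_top _ Submodule.range_snd, ker_comp_of_ker_eq_bot _ Submodule.ker_inr]
  exact hf

theorem IsTrace.superpose {T : X →ₗ[K] Y} (hT : IsTrace f T) :
    IsTrace (superpose g f) (g.prodMap T) := by
  intro p u hu
  rw [comp22_superpose, comp21_superpose] at hu
  simp [comp11_superpose, comp12_superpose, hT p.2 u hu]

end Superpose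

/-- superposing axiom for the kernel-image partial trace. -/
theorem kernel_image_trace_superposing
    {X Y Z W₀ : Type*}
    [Field K] [AddCommGroup X] [Module K X] [AddCommGroup Y] [Module K Y]
    [AddCommGroup U] [Module K U] [AddCommGroup Z] [Module K Z]
    [AddCommGroup W₀] [Module K W₀]
    (f : X × U →ₗ[K] Y × U) (g : W₀ →ₗ[K] Z)
    (hf : TraceClass f) :
    TraceClass ((LinearEquiv.prodAssoc K Z Y U).symm.toLinearMap ∘ₗ
        (g.prodMap f) ∘ₗ (LinearEquiv.prodAssoc K W₀ X U).toLinearMap) ∧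
      ∀ Tf : X →ₗ[K] Y, IsTrace f Tf →
        IsTrace ((LinearEquiv.prodAssoc K Z Y U).symm.toLinearMap ∘ₗ
            (g.prodMap f) ∘ₗ (LinearEquiv.prodAssoc K W₀ X U).toLinearMap)
          (g.prodMap Tf) :=
  ⟨hf.superpose g f, fun _ hT => hT.superpose g f⟩
end

section
/- If f : V ⊕ U → W ⊕ U is a linear map between finite dimensional vector spaces such that I - f₂₂ is invertible, then f satisfies the kernel-image trace class conditions (im f₂₁ ⊆ im(I - f₂₂) and ker(I - f₂₂) ⊆ ker f₁₂), and the kernel-image partial trace equals f₁₁ + f₁₂ ∘ (I - f₂₂)⁻¹ ∘ f₂₁. -/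
open LinearMap

variable {K V U U' W : Type*}

section

variable [Field K] [AddCommGroup V] [Module K V] [AddCommGroup U] [Module K U]
  [AddCommGroup W] [Module K W] {f : V × U →ₗ[K] W × U}

theorem traceClass_of_bijective
    (h : Function.Bijective (LinearMap.id - comp22 f : U →ₗ[K] U)) : TraceClass f := by
  constructor
  · rw [LinearMap.range_eq_top.mpr h.surjective]
    exact le_top
  · rw [LinearMap.ker_eq_bot.mpr h.injective]
    exact bot_le

theorem isTrace_of_leftInverse {g : U →ₗ[K] U}
    (hg : g ∘ₗ (LinearMap.id - comp22 f) = LinearMap.id) :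
    IsTrace f (comp11 f + comp12 f ∘ₗ g ∘ₗ comp21 f) := by
  intro v u hu
  have hu' : u = g (comp21 f v) := by
    rw [← hu]
    exact (LinearMap.congr_fun hg u).symm
  rw [hu']
  rfl

end

theorem kernel_image_trace_of_invertible_general
    [Field K] [AddCommGroup V] [Module K V] [AddCommGroup U] [Module K U]
    [AddCommGroup W] [Module K W]
    (f : V × U →ₗ[K] W × U) (g : U →ₗ[K] U)
    (hg1 : g ∘ₗ (LinearMap.id - comp22 f) = LinearMap.id)
    (hg2 : (LinearMap.id - comp22 f) ∘ₗ g = LinearMap.id) :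
    TraceClass f ∧ IsTrace f (comp11 f + comp12 f ∘ₗ g ∘ₗ comp21 f) := by
  have hbij : Function.Bijective (LinearMap.id - comp22 f : U →ₗ[K] U) :=
    Function.bijective_iff_has_inverse.mpr
      ⟨g, LinearMap.congr_fun hg1, LinearMap.congr_fun hg2⟩
  exact ⟨traceClass_of_bijective hbij, isTrace_of_leftInverse hg1⟩

/-- if `I - f₂₂` is invertible (finite dimensions), then `f` is in the
kernel-image trace class and the partial trace is `f₁₁ + f₁₂ ∘ (I - f₂₂)⁻¹ ∘ f₂₁`. -/
theorem kernel_image_trace_of_invertible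
    [Field K] [AddCommGroup V] [Module K V] [AddCommGroup U] [Module K U]
    [AddCommGroup W] [Module K W]
    [FiniteDimensional K V] [FiniteDimensional K U] [FiniteDimensional K W]
    (f : V × U →ₗ[K] W × U) (g : U →ₗ[K] U)
    (hg1 : g ∘ₗ (LinearMap.id - comp22 f) = LinearMap.id)
    (hg2 : (LinearMap.id - comp22 f) ∘ₗ g = LinearMap.id) :
    TraceClass f ∧ IsTrace f (comp11 f + comp12 f ∘ₗ g ∘ₗ comp21 f) :=
  kernel_image_trace_of_invertible_general f g hg1 hg2
end

section
/- Let f : X × U → Y × U be a finite stochastic relation in the trace class over U, and g : W → Z any finite stochastic relation. Then g ⊗ f is in the trace class over U and Tr^U(g ⊗ f) = g ⊗ Tr^U(f). -/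
open Finset

/-- A finite (sub)stochastic relation from `A` to `B`: a matrix with entries in `[0,1]`
whose columns sum to at most `1`. -/
def SubStoch {A B : Type*} [Fintype B] (f : B → A → ℝ) : Prop :=
  (∀ b a, 0 ≤ f b a ∧ f b a ≤ 1) ∧ ∀ a, ∑ b, f b a ≤ 1

theorem SubStoch.sum_nonneg {A B : Type*} [Fintype B] {f : B → A → ℝ} (hf : SubStoch f)
    (a : A) : 0 ≤ ∑ b, f b a :=
  Finset.sum_nonneg fun b _ => (hf.1 b a).1

theorem Finset.sum_mul_sum_sum {ι κ μ R : Type*} [NonUnitalNonAssocSemiring R]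
    (s : Finset ι) (t : Finset κ) (r : Finset μ) (a : ι → R) (b : κ → μ → R) :
    (∑ i ∈ s, a i) * ∑ j ∈ t, ∑ k ∈ r, b j k = ∑ i ∈ s, ∑ j ∈ t, ∑ k ∈ r, a i * b j k := by
  rw [sum_mul_sum]
  simp only [mul_sum]

theorem stochastic_partial_trace_superposing_general
    {X Y U W Z : Type*} [Fintype X] [Fintype Y] [Fintype U] [Fintype W] [Fintype Z]
    (f : (Y × U) → (X × U) → ℝ)
    (htc : ∀ x : X, ∑ y : Y, ∑ u : U, f (y, u) (x, u) ≤ 1)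
    (g : Z → W → ℝ) (hg : SubStoch g) :
    (∀ (w : W) (x : X),
        ∑ z : Z, ∑ y : Y, ∑ u : U, g z w * f (y, u) (x, u) ≤ 1) ∧
    (fun (p : Z × Y) (q : W × X) =>
        ∑ u : U, g p.1 q.1 * f (p.2, u) (q.2, u)) =
      (fun (p : Z × Y) (q : W × X) =>
        g p.1 q.1 * ∑ u : U, f (p.2, u) (q.2, u)) := by
  refine ⟨fun w x => ?_, funext₂ fun p q => (mul_sum _ _ _).symm⟩
  rw [← sum_mul_sum_sum, mul_comm]
  exact mul_le_one₀ (htc x) (hg.sum_nonneg w) (hg.2 w)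

/-- superposing for the stochastic partial trace:
`g ⊗ f` is in the trace class over `U` and `Tr^U(g ⊗ f) = g ⊗ Tr^U(f)`. -/
theorem stochastic_partial_trace_superposing
    {X Y U W Z : Type*} [Fintype X] [Fintype Y] [Fintype U] [Fintype W] [Fintype Z]
    (f : (Y × U) → (X × U) → ℝ) (hf : SubStoch f)
    (htc : ∀ x : X, ∑ y : Y, ∑ u : U, f (y, u) (x, u) ≤ 1)
    (g : Z → W → ℝ) (hg : SubStoch g) :
    (∀ (w : W) (x : X),
        ∑ z : Z, ∑ y : Y, ∑ u : U, g z w * f (y, u) (x, u) ≤ 1) ∧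
    (fun (p : Z × Y) (q : W × X) =>
        ∑ u : U, g p.1 q.1 * f (p.2, u) (q.2, u)) =
      (fun (p : Z × Y) (q : W × X) =>
        g p.1 q.1 * ∑ u : U, f (p.2, u) (q.2, u)) :=
  stochastic_partial_trace_superposing_general f htc g hg
end

section
/- Let C be a symmetric monoidal category whose tensor unit I is a terminal object (an affine category). Then there is a fully faithful strong monoidal functor Φ : (FinSet, ×, 1) → (C⁺, ⊗, I) from finite sets with cartesian product into the finite coproduct completion of C, which moreover preserves finite coproducts. Here Φ(A) = {I}_{a∈A} (the constant family at the unit) and Φ(φ) = (φ, {id_I}). -/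
open CategoryTheory CategoryTheory.Limits

universe v u

/-- An object of the finite coproduct completion `C⁺` of a category `C`:
a finite family of objects of `C` indexed by a finite (index) set. -/
structure FamObj (C : Type u) where
  ι : Type
  [fin : Fintype ι]
  obj : ι → C

attribute [instance] FamObj.fin

variable {C : Type u} [Category.{v} C]

/-- The finite coproduct completion `C⁺` as a category: a morphism
`{V_a}_{a∈A} → {W_b}_{b∈B}` is a pair of a reindexing function `φ : A → B` and a
family of morphisms `f_a : V_a → W_{φ a}` of `C`. -/
instance FamObj.category : Category (FamObj C) where
  Hom X Y := Σ' φ : X.ι → Y.ι, ∀ a : X.ι, X.obj a ⟶ Y.obj (φ a)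
  id X := ⟨fun a => a, fun a => 𝟙 (X.obj a)⟩
  comp f g := ⟨fun a => g.1 (f.1 a), fun a => f.2 a ≫ g.2 (f.1 a)⟩
  id_comp f := congrArg (PSigma.mk f.1) (funext fun a => Category.id_comp (f.2 a))
  comp_id f := congrArg (PSigma.mk f.1) (funext fun a => Category.comp_id (f.2 a))
  assoc f g h := congrArg (PSigma.mk fun a => h.1 (g.1 (f.1 a)))
    (funext fun a => Category.assoc (f.2 a) (g.2 (f.1 a)) (h.2 (g.1 (f.1 a))))

/-- Concatenation of two finite families: the coproduct in `C⁺`. -/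
def FamObj.concat (X Y : FamObj C) : FamObj C where
  ι := X.ι ⊕ Y.ι
  obj := Sum.elim X.obj Y.obj

/-- The first coproduct injection into a concatenated family. -/
def FamObj.concatInl (X Y : FamObj C) : X ⟶ X.concat Y :=
  ⟨Sum.inl, fun a => 𝟙 (X.obj a)⟩

/-- The second coproduct injection into a concatenated family. -/
def FamObj.concatInr (X Y : FamObj C) : Y ⟶ X.concat Y :=
  ⟨Sum.inr, fun b => 𝟙 (Y.obj b)⟩

/-- The empty family, the initial object of `C⁺`. -/
def FamObj.empty (C : Type u) : FamObj C where
  ι := PEmpty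
  obj := PEmpty.elim

open MonoidalCategory

/-!
On `FintypeCat` the cartesian product is inherited from `Type`, finiteness being stable under
products, and on `C⁺` the tensor product is computed index-wise. For any object `V`, the functor
`A ↦ {V}_{a∈A}` is faithful, is full as soon as `id_V` is the only endomorphism of `V`, and
sends the disjoint union `Σ j, A j` to a coproduct in `C⁺`. For `V = I` terminal, the unitor
`I ⊗ I ≅ I` makes it strong monoidal: every coherence condition holds because a morphism into a
family of terminal objects is determined by its index map.
-/

namespace FamObj

@[simp]
lemma id_snd (X : FamObj C) (a : X.ι) : (𝟙 X : X ⟶ X).2 a = 𝟙 (X.obj a) := rfl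

@[simp]
lemma comp_snd {X Y Z : FamObj C} (f : X ⟶ Y) (g : Y ⟶ Z) (a : X.ι) :
    (f ≫ g).2 a = f.2 a ≫ g.2 (f.1 a) := rfl

lemma hom_ext {X Y : FamObj C} {f g : X ⟶ Y} (h₁ : f.1 = g.1) (h₂ : f.2 ≍ g.2) : f = g :=
  PSigma.ext h₁ h₂

lemma hom_ext_of_isTerminal {X Y : FamObj C} (hY : ∀ b, IsTerminal (Y.obj b)) {f g : X ⟶ Y}
    (h : f.1 = g.1) : f = g := by
  obtain ⟨φ, f⟩ := f
  obtain ⟨ψ, g⟩ := g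
  obtain rfl : φ = ψ := h
  exact hom_ext rfl <| heq_of_eq <| funext fun _ => (hY _).hom_ext _ _

section Monoidal

variable [MonoidalCategory C]

/- Definitions rather than instances, so that `⊗` in the final statement refers to the structures
it quantifies over. -/
@[simps, reducible]
def monoidalCategoryStruct : MonoidalCategoryStruct (FamObj C) where
  tensorObj X Y := { ι := X.ι × Y.ι, obj := fun p => X.obj p.1 ⊗ Y.obj p.2 }
  whiskerLeft X _ _ f := ⟨fun p => (p.1, f.1 p.2), fun p => X.obj p.1 ◁ f.2 p.2⟩
  whiskerRight f Y := ⟨fun p => (f.1 p.1, p.2), fun p => f.2 p.1 ▷ Y.obj p.2⟩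
  tensorHom f g := ⟨fun p => (f.1 p.1, g.1 p.2), fun p => f.2 p.1 ⊗ₘ g.2 p.2⟩
  tensorUnit := { ι := PUnit, obj := fun _ => 𝟙_ C }
  associator X Y Z :=
    { hom := ⟨fun p => (p.1.1, (p.1.2, p.2)), fun _ => (α_ _ _ _).hom⟩
      inv := ⟨fun p => ((p.1, p.2.1), p.2.2), fun _ => (α_ _ _ _).inv⟩
      hom_inv_id := hom_ext rfl <| heq_of_eq <| funext fun _ => by simp
      inv_hom_id := hom_ext rfl <| heq_of_eq <| funext fun _ => by simp }
  leftUnitor X :=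
    { hom := ⟨fun p => p.2, fun _ => (λ_ _).hom⟩
      inv := ⟨fun a => (PUnit.unit, a), fun _ => (λ_ _).inv⟩
      hom_inv_id := hom_ext rfl <| heq_of_eq <| funext fun _ => by simp
      inv_hom_id := hom_ext rfl <| heq_of_eq <| funext fun _ => by simp }
  rightUnitor X :=
    { hom := ⟨fun p => p.1, fun _ => (ρ_ _).hom⟩
      inv := ⟨fun a => (a, PUnit.unit), fun _ => (ρ_ _).inv⟩
      hom_inv_id := hom_ext rfl <| heq_of_eq <| funext fun _ => by simp
      inv_hom_id := hom_ext rfl <| heq_of_eq <| funext fun _ => by simp }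

attribute [local instance] monoidalCategoryStruct in
@[reducible]
def monoidalCategory : MonoidalCategory (FamObj C) where
  tensorHom_def _ _ :=
    hom_ext rfl <| heq_of_eq <| funext fun _ => by simp [MonoidalCategory.tensorHom_def]
  id_tensorHom_id _ _ := hom_ext rfl <| heq_of_eq <| funext fun _ => by simp
  tensorHom_comp_tensorHom _ _ _ _ := hom_ext rfl <| heq_of_eq <| funext fun _ => by simp
  whiskerLeft_id _ _ := hom_ext rfl <| heq_of_eq <| funext fun _ => by simp
  id_whiskerRight _ _ := hom_ext rfl <| heq_of_eq <| funext fun _ => by simp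
  associator_naturality _ _ _ := hom_ext rfl <| heq_of_eq <| funext fun _ => by simp
  leftUnitor_naturality _ := hom_ext rfl <| heq_of_eq <| funext fun _ => by simp
  rightUnitor_naturality _ := hom_ext rfl <| heq_of_eq <| funext fun _ => by simp
  pentagon _ _ _ _ := hom_ext rfl <| heq_of_eq <| funext fun _ => by simp
  triangle _ _ := hom_ext rfl <| heq_of_eq <| funext fun _ => by simp

end Monoidal

end FamObj

lemma ObjectProperty.isMonoidal_finite :
    ObjectProperty.IsMonoidal (Finite : ObjectProperty (Type 0)) where
  prop_unit := inferInstanceAs (Finite PUnit)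
  prop_tensor X Y _ _ := inferInstanceAs (Finite (X × Y))

namespace FintypeCat

def sigmaCofan {J : Type} (A : J → FintypeCat.{0}) [Finite J] : Cofan A :=
  Cofan.mk (of (Σ j, A j)) fun j => homMk fun x => ⟨j, x⟩

def isColimitSigmaCofan {J : Type} (A : J → FintypeCat.{0}) [Finite J] :
    IsColimit (sigmaCofan A) :=
  Cofan.IsColimit.mk _ (fun s => homMk fun (p : Σ j, A j) => s.inj p.1 p.2) (fun _ _ => rfl)
    (fun _ _ hm => hom_ext _ _ fun (p : Σ j, A j) => ConcreteCategory.congr_hom (hm p.1) p.2)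

end FintypeCat

namespace FamObj

noncomputable def const (V : C) : FintypeCat.{0} ⥤ FamObj C where
  obj A := { ι := A, fin := FintypeCat.fintype, obj := fun _ => V }
  map f := ⟨fun a => f a, fun _ => 𝟙 V⟩
  map_comp _ _ := hom_ext rfl <| heq_of_eq <| funext fun _ => (Category.comp_id _).symm

variable (V : C)

instance const_faithful : (const V).Faithful where
  map_injective h := FintypeCat.hom_ext _ _ fun a => congrFun (congrArg PSigma.fst h) a

instance const_full [Subsingleton (V ⟶ V)] : (const V).Full where
  map_surjective g := ⟨FintypeCat.homMk g.1,
    hom_ext rfl <| heq_of_eq <| funext fun _ => Subsingleton.elim (α := V ⟶ V) _ _⟩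

noncomputable def isColimitConstSigmaCofan {J : Type} (A : J → FintypeCat.{0}) [Finite J] :
    IsColimit (Cofan.mk ((const V).obj (FintypeCat.sigmaCofan A).pt)
      fun j => (const V).map ((FintypeCat.sigmaCofan A).inj j)) :=
  Cofan.IsColimit.mk _
    (fun s => ⟨fun (p : Σ j, A j) => (s.inj p.1).1 p.2, fun p => (s.inj p.1).2 p.2⟩)
    (fun _ _ => hom_ext rfl <| heq_of_eq <| funext fun _ => Category.id_comp _)
    (fun s m hm => by
      rw [show s.inj = fun j => _ ≫ m from funext fun j => (hm j).symm]
      exact hom_ext rfl <| heq_of_eq <| funext fun _ => (Category.id_comp (m.2 _)).symm)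

instance const_preservesFiniteCoproducts : PreservesFiniteCoproducts (const V) where
  preserves n :=
    have (A : Fin n → FintypeCat.{0}) : PreservesColimit (Discrete.functor A) (const V) :=
      preservesColimit_of_preserves_colimit_cocone (FintypeCat.isColimitSigmaCofan A)
        ((isColimitMapCoconeCofanMkEquiv _ _ _).symm (isColimitConstSigmaCofan V A))
    preservesColimitsOfShape_of_discrete _

variable [MonoidalCategory C]

attribute [local instance] ObjectProperty.isMonoidal_finite monoidalCategory

noncomputable def constUnitCoreMonoidal (hI : IsTerminal (𝟙_ C)) :
    (const (𝟙_ C)).CoreMonoidal where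
  εIso :=
    { hom := ⟨fun _ => PUnit.unit, fun _ => 𝟙 (𝟙_ C)⟩
      inv := ⟨fun _ => PUnit.unit, fun _ => 𝟙 (𝟙_ C)⟩
      hom_inv_id := hom_ext_of_isTerminal (fun _ => hI) rfl
      inv_hom_id := hom_ext_of_isTerminal (fun _ => hI) rfl }
  μIso _ _ :=
    { hom := ⟨fun p => p, fun _ => (λ_ (𝟙_ C)).hom⟩
      inv := ⟨fun p => p, fun _ => (λ_ (𝟙_ C)).inv⟩
      hom_inv_id := hom_ext rfl <| heq_of_eq <| funext fun _ => (λ_ (𝟙_ C)).hom_inv_id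
      inv_hom_id := hom_ext rfl <| heq_of_eq <| funext fun _ => (λ_ (𝟙_ C)).inv_hom_id }
  μIso_hom_natural_left _ _ := hom_ext_of_isTerminal (fun _ => hI) rfl
  μIso_hom_natural_right _ _ := hom_ext_of_isTerminal (fun _ => hI) rfl
  associativity _ _ _ := hom_ext_of_isTerminal (fun _ => hI) rfl
  left_unitality _ := hom_ext_of_isTerminal (fun _ => hI) rfl
  right_unitality _ := hom_ext_of_isTerminal (fun _ => hI) rfl

end FamObj

/-- if `C` is an affine symmetric monoidal category (its unit is
terminal), then there is a fully faithful strong monoidal functor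
`Φ : (FinSet, ×, 1) → (C⁺, ⊗, I)` which preserves finite coproducts, where
`Φ(A) = {I}_{a∈A}` is the constant family at the unit and `Φ(φ) = (φ, {id_I})`. -/
theorem finset_embeds_into_affine_coproduct_completion
    (C : Type u) [Category.{v} C] [MonoidalCategory C]
    (hI : IsTerminal (𝟙_ C)) :
    ∃ (N : MonoidalCategory FintypeCat.{0}) (M : MonoidalCategory (FamObj C)),
      letI : MonoidalCategory FintypeCat.{0} := N
      letI : MonoidalCategory (FamObj C) := M
      -- the monoidal structure on `FinSet` is the cartesian one
      (∀ A B : FintypeCat.{0}, (A ⊗ B) = FintypeCat.of (A × B)) ∧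
      ((𝟙_ FintypeCat.{0}) = FintypeCat.of PUnit) ∧
      -- the monoidal structure on `C⁺` is the one induced from `C`
      (∀ X Y : FamObj C,
        (X ⊗ Y) = { ι := X.ι × Y.ι, obj := fun p => X.obj p.1 ⊗ Y.obj p.2 }) ∧
      ((𝟙_ (FamObj C)) = { ι := PUnit, obj := fun _ => (𝟙_ C) }) ∧
      ∃ Φ : FintypeCat.{0} ⥤ FamObj C,
        (∀ A : FintypeCat.{0}, Φ.obj A = { ι := A, fin := FintypeCat.fintype, obj := fun _ => (𝟙_ C) }) ∧
        (∀ (A B : FintypeCat.{0}) (f : A ⟶ B),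
          HEq (Φ.map f)
            (show ({ ι := A, fin := FintypeCat.fintype, obj := fun _ => (𝟙_ C) } : FamObj C) ⟶
                ({ ι := B, fin := FintypeCat.fintype, obj := fun _ => (𝟙_ C) } : FamObj C) from
              ⟨fun a => f a, fun _ => 𝟙 (𝟙_ C)⟩)) ∧
        Φ.Full ∧ Φ.Faithful ∧
        Nonempty (Φ.Monoidal) ∧
        Nonempty (PreservesFiniteCoproducts Φ) := by
  have : ObjectProperty.IsMonoidal (Finite : ObjectProperty (Type 0)) :=
    ObjectProperty.isMonoidal_finite
  let _ : MonoidalCategory (FamObj C) := FamObj.monoidalCategory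
  have : Subsingleton (𝟙_ C ⟶ 𝟙_ C) := ⟨hI.hom_ext⟩
  exact ⟨inferInstance, inferInstance, fun _ _ => rfl, rfl, fun _ _ => rfl, rfl,
    FamObj.const (𝟙_ C), fun _ => rfl, fun _ _ _ => HEq.rfl, inferInstance, inferInstance,
    ⟨(FamObj.constUnitCoreMonoidal hI).toMonoidal⟩, ⟨inferInstance⟩⟩
end
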